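/- Let u ⊆ {1,…,d}. Then ∫_{[0,1]^d} ∫_{[0,1]^d} f(x) f(x_u : y_{-u}) dx dy = μ² + τ̲²_u. -/

import Mathlib

/-!
Decompose `x = (x_u : x'_{-u})` with `x_u`, `x'_{-u}` independent. Since `(x : y)_u = (x_u : y_{-u})`,
the double integral becomes `∫ f(w_u : x'_{-u}) f(w_u : y_{-u}) dw dx' dy`, and integrating out
`x'` and `y` for fixed `w` leaves `∫ (∫ f(w_u : y_{-u}) dy)² dw`.
-/

open MeasureTheory Finset

/-- The uniform (Lebesgue) probability measure on the interval `[0,1]`. -/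
noncomputable def unifSeg : Measure ℝ := (volume : Measure ℝ).restrict (Set.Icc 0 1)

/-- The uniform (Lebesgue) product probability measure on the cube `[0,1]^d`. -/
noncomputable def unifCube (d : ℕ) : Measure (Fin d → ℝ) :=
  Measure.pi fun _ => unifSeg

/-- `glue u x y` is the point whose `j`-th coordinate is `x j` for `j ∈ u`
and `y j` otherwise, i.e. `(x_u : y_{-u})`. -/
def glue {d : ℕ} (u : Finset (Fin d)) (x y : Fin d → ℝ) : Fin d → ℝ :=
  fun j => if j ∈ u then x j else y j

/-- The lower Sobol' index `τ̲²_u` of the set `u`. -/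
noncomputable def lowerSobol {d : ℕ} (f : (Fin d → ℝ) → ℝ) (u : Finset (Fin d)) : ℝ :=
  (∫ x, (∫ y, f (glue u x y) ∂(unifCube d)) ^ 2 ∂(unifCube d))
    - (∫ x, f x ∂(unifCube d)) ^ 2

/-- The variance `σ²` of `f` over the unit cube. -/
noncomputable def sigmaSq {d : ℕ} (f : (Fin d → ℝ) → ℝ) : ℝ :=
  (∫ x, f x ^ 2 ∂(unifCube d)) - (∫ x, f x ∂(unifCube d)) ^ 2

/-- The upper Sobol' index `τ̄²_u = σ² - τ̲²_{uᶜ}` of the set `u`. -/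
noncomputable def upperSobol {d : ℕ} (f : (Fin d → ℝ) → ℝ) (u : Finset (Fin d)) : ℝ :=
  sigmaSq f - lowerSobol f uᶜ

instance : IsProbabilityMeasure unifSeg :=
  ⟨by simp [unifSeg, Real.volume_Icc]⟩

instance (d : ℕ) : IsProbabilityMeasure (unifCube d) := by
  unfold unifCube; infer_instance

section

variable {α β : Type*} [MeasurableSpace α] [MeasurableSpace β]

theorem MeasureTheory.MeasurePreserving.integral_comp_of_aestronglyMeasurable {E : Type*}
    [NormedAddCommGroup E] [NormedSpace ℝ E] {μ : Measure α} {ν : Measure β} {T : α → β}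
    (hT : MeasurePreserving T μ ν) {g : β → E} (hg : AEStronglyMeasurable g ν) :
    ∫ x, g (T x) ∂μ = ∫ y, g y ∂ν := by
  rw [← hT.map_eq] at hg ⊢
  exact (integral_map hT.measurable.aemeasurable hg).symm

theorem integral_prod_mul_eq_integral_sq {μ : Measure α} {ν : Measure β} [SFinite μ]
    [IsProbabilityMeasure ν] {F : α × β → ℝ} (hF : MemLp F 2 (μ.prod ν)) :
    ∫ q, F q.1 * F (q.1.1, q.2) ∂((μ.prod ν).prod ν) = ∫ w, (∫ y, F (w, y) ∂ν) ^ 2 ∂μ := by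
  set g : α → ℝ := fun w => ∫ y, F (w, y) ∂ν
  have hF₁ : MemLp (fun q : (α × β) × β => F q.1) 2 ((μ.prod ν).prod ν) :=
    hF.comp_measurePreserving measurePreserving_fst
  have hF₂ : MemLp (fun q : (α × β) × β => F (q.1.1, q.2)) 2 ((μ.prod ν).prod ν) :=
    hF.comp_measurePreserving (measurePreserving_fst.prod (.id ν))
  have hint : Integrable (fun q : (α × β) × β => F q.1 * F (q.1.1, q.2)) ((μ.prod ν).prod ν) :=
    hF₁.integrable_mul hF₂
  have hinner : ∀ z : α × β, ∫ y, F z * F (z.1, y) ∂ν = F z * g z.1 := fun z =>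
    integral_const_mul _ _
  have hintG : Integrable (fun z : α × β => F z * g z.1) (μ.prod ν) :=
    hint.integral_prod_left.congr (.of_forall hinner)
  calc ∫ q, F q.1 * F (q.1.1, q.2) ∂((μ.prod ν).prod ν)
      = ∫ z, F z * g z.1 ∂(μ.prod ν) := by
        rw [integral_prod _ hint]; simp only [hinner]
    _ = ∫ w, g w ^ 2 ∂μ := by
        rw [integral_prod _ hintG]
        simp only [integral_mul_const, sq, g]

theorem integral_integral_mul_comp_eq_integral_sq {μ : Measure α} [IsProbabilityMeasure μ]
    {G : α → α → α} (hG : MeasurePreserving (fun z : α × α => G z.1 z.2) (μ.prod μ) μ)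
    (hGG : ∀ w x y, G (G w x) y = G w y) {f : α → ℝ} (hf : MemLp f 2 μ) :
    ∫ x, ∫ y, f x * f (G x y) ∂μ ∂μ = ∫ x, (∫ y, f (G x y) ∂μ) ^ 2 ∂μ := by
  have hfG : MemLp (fun z : α × α => f (G z.1 z.2)) 2 (μ.prod μ) := hf.comp_measurePreserving hG
  have hint : Integrable (fun z : α × α => f z.1 * f (G z.1 z.2)) (μ.prod μ) :=
    (hf.comp_measurePreserving measurePreserving_fst).integrable_mul hfG
  have hsubst := hG.prod (.id μ)
  calc ∫ x, ∫ y, f x * f (G x y) ∂μ ∂μ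
      = ∫ z, f z.1 * f (G z.1 z.2) ∂(μ.prod μ) := (integral_prod _ hint).symm
    _ = ∫ q, f (G q.1.1 q.1.2) * f (G q.1.1 q.2) ∂((μ.prod μ).prod μ) := by
        -- substitute `x = G w x'`, after which `G x y = G w y`
        rw [← hsubst.integral_comp_of_aestronglyMeasurable hint.aestronglyMeasurable]
        simp only [Prod.map, id, hGG]
    _ = ∫ x, (∫ y, f (G x y) ∂μ) ^ 2 ∂μ := integral_prod_mul_eq_integral_sq hfG

end

theorem glue_glue {d : ℕ} (u : Finset (Fin d)) (w x y : Fin d → ℝ) :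
    glue u (glue u w x) y = glue u w y := by
  funext j; simp only [glue]; split_ifs <;> rfl

theorem measurePreserving_glue {d : ℕ} (μ : Fin d → Measure ℝ) [∀ i, IsProbabilityMeasure (μ i)]
    (u : Finset (Fin d)) :
    MeasurePreserving (fun z : (Fin d → ℝ) × (Fin d → ℝ) => glue u z.1 z.2)
      ((Measure.pi μ).prod (Measure.pi μ)) (Measure.pi μ) := by
  classical
  let e := MeasurableEquiv.piEquivPiSubtypeProd (fun _ : Fin d => ℝ) (· ∈ u)
  have he := measurePreserving_piEquivPiSubtypeProd μ (· ∈ u)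
  have hsplit : (fun z : (Fin d → ℝ) × (Fin d → ℝ) => glue u z.1 z.2)
      = e.symm ∘ Prod.map Prod.fst Prod.snd ∘ Prod.map e e := by
    funext z j
    simp only [glue, e, MeasurableEquiv.piEquivPiSubtypeProd, MeasurableEquiv.coe_mk,
      MeasurableEquiv.symm_mk, Equiv.piEquivPiSubtypeProd, Equiv.coe_fn_mk,
      Equiv.coe_fn_symm_mk, Function.comp_apply, Prod.map]
    split_ifs <;> rfl
  rw [hsplit]
  exact (he.symm e).comp ((measurePreserving_fst.prod measurePreserving_snd).comp
    (he.prod he))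

theorem stmt8_general {d : ℕ} (f : (Fin d → ℝ) → ℝ)
    (hf : MemLp f 2 (unifCube d)) (u : Finset (Fin d)) :
    (∫ x, ∫ y, f x * f (glue u x y) ∂(unifCube d) ∂(unifCube d))
      = (∫ x, f x ∂(unifCube d)) ^ 2 + lowerSobol f u := by
  have hglue : MeasurePreserving (fun z : (Fin d → ℝ) × (Fin d → ℝ) => glue u z.1 z.2)
      ((unifCube d).prod (unifCube d)) (unifCube d) := measurePreserving_glue _ u
  rw [integral_integral_mul_comp_eq_integral_sq hglue (glue_glue u) hf, lowerSobol]
  ring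

theorem stmt8 {d : ℕ} (hd : 1 ≤ d) (f : (Fin d → ℝ) → ℝ)
    (hf : MemLp f 2 (unifCube d)) (u : Finset (Fin d)) :
    (∫ x, ∫ y, f x * f (glue u x y) ∂(unifCube d) ∂(unifCube d))
      = (∫ x, f x ∂(unifCube d)) ^ 2 + lowerSobol f u :=
  stmt8_general f hf u
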